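/- arXiv:1304.2629 — 4 statements merged into one kernel-verified Lean document; each statement's English description precedes it below -/
import Mathlib

section
/- Let 0 ≤ ρ₂ < ρ₁ ≤ π, let γ be a closed curve on S² whose radius of curvature satisfies ρ₂ < ρ(t) < ρ₁ for all t, and let θ ∈ [ρ₁ − π, ρ₂]. Then the translated curve γ_θ(t) = cos θ · γ(t) + sin θ · n(t) is a regular closed curve; its velocity is γ_θ'(t) = (|γ'(t)| sin(ρ(t) − θ)/sin ρ(t)) · t(t), which is a positive multiple of t(t); its unit tangent equals t(t) and its unit normal equals −sin θ · γ(t) + cos θ · n(t). Equivalently, the frame Φ_{γ_θ}(t) (the 3×3 matrix with columns γ_θ(t), t_{γ_θ}(t), n_{γ_θ}(t)) equals Φ_γ(t) · R_θ, where R_θ is the matrix with rows (cos θ, 0, −sin θ), (0, 1, 0), (sin θ, 0, cos θ). -/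
noncomputable section

open Real Set Filter
open scoped RealInnerProductSpace

abbrev E3 := EuclideanSpace ℝ (Fin 3)

/-- The cross product on `ℝ³`. -/
def cross3 (u v : E3) : E3 :=
  (WithLp.equiv 2 (Fin 3 → ℝ)).symm
    ![u 1 * v 2 - u 2 * v 1, u 2 * v 0 - u 0 * v 2, u 0 * v 1 - u 1 * v 0]

/-- Unit tangent vector of a curve. -/
def unitTan (γ : ℝ → E3) (t : ℝ) : E3 := ‖deriv γ t‖⁻¹ • deriv γ t

/-- Unit normal vector of a spherical curve. -/
def unitNor (γ : ℝ → E3) (t : ℝ) : E3 := cross3 (γ t) (unitTan γ t)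

/-- Geodesic curvature of a spherical curve. -/
def geodCurv (γ : ℝ → E3) (t : ℝ) : ℝ :=
  ⟪deriv (unitTan γ) t, unitNor γ t⟫ / ‖deriv γ t‖

/-- Radius of curvature: `arccot` of the geodesic curvature, valued in `(0, π)`. -/
def radCurv (γ : ℝ → E3) (t : ℝ) : ℝ := π / 2 - arctan (geodCurv γ t)

/-- A closed curve on the sphere `S²`: a `C²`, 1-periodic, regular map into the unit sphere. -/
def IsClosedCurve (γ : ℝ → E3) : Prop :=
  ContDiff ℝ 2 γ ∧ Function.Periodic γ 1 ∧ ∀ t, ‖γ t‖ = 1 ∧ deriv γ t ≠ 0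

/-- Homotopy of closed spherical curves through closed curves whose radius
of curvature takes values in `(ρ₂, ρ₁)`. -/
def HomotopicIn (ρ₂ ρ₁ : ℝ) (γ₀ γ₁ : ℝ → E3) : Prop :=
  ∃ H : ℝ → ℝ → E3,
    H 0 = γ₀ ∧ H 1 = γ₁ ∧
    (∀ s ∈ Icc (0:ℝ) 1, IsClosedCurve (H s) ∧ ∀ t, radCurv (H s) t ∈ Ioo ρ₂ ρ₁) ∧
    ContinuousOn (fun p : ℝ × ℝ => H p.1 p.2) (Icc 0 1 ×ˢ univ) ∧
    ContinuousOn (fun p : ℝ × ℝ => deriv (H p.1) p.2) (Icc 0 1 ×ˢ univ) ∧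
    ContinuousOn (fun p : ℝ × ℝ => deriv (deriv (H p.1)) p.2) (Icc 0 1 ×ˢ univ)

/-- `σ` is a circle traversed `k` times with radius of curvature `α`. -/
def IsCircleTraversed (k : ℕ) (α : ℝ) (σ : ℝ → E3) : Prop :=
  α ∈ Ioo (0:ℝ) π ∧
  ∃ R : Matrix (Fin 3) (Fin 3) ℝ, R.transpose * R = 1 ∧ R.det = 1 ∧
    ∀ t, σ t = (WithLp.equiv 2 (Fin 3 → ℝ)).symm
      (R.mulVec ![sin α * cos (2 * π * k * t), sin α * sin (2 * π * k * t), cos α])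

/-- Caustic band / translation formula. -/
def caustic (γ : ℝ → E3) (t θ : ℝ) : E3 :=
  Real.cos θ • γ t + Real.sin θ • unitNor γ t

/-- The frame of a spherical curve: the matrix with columns `γ(t)`, `t(t)`, `n(t)`. -/
def frameM (γ : ℝ → E3) (t : ℝ) : Matrix (Fin 3) (Fin 3) ℝ :=
  Matrix.of fun i j => ![γ t, unitTan γ t, unitNor γ t] j i

/-!
Along a regular curve on `S²` with speed `v = |γ'|` the frame `(γ, t, n)` obeys
`γ' = v t`, `t' = -v γ + κ v n` and `n' = -κ v t`. Hence
`γ_θ' = v (cos θ - κ sin θ) t = v sin (ρ - θ) / sin ρ · t`, because `cot ρ = κ`, and the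
bounds on `θ` give `0 < ρ - θ < π`. So `γ_θ` has unit tangent `t`, and its normal `γ_θ × t` is
`n` rotated by `θ` in the `(γ, n)`-plane.
-/

open Matrix WithLp

theorem cross3_eq_crossProduct (u v : E3) : cross3 u v = toLp 2 (ofLp u ⨯₃ ofLp v) := rfl

theorem E3.inner_eq_dotProduct (u v : E3) : ⟪u, v⟫ = ofLp u ⬝ᵥ ofLp v := by
  rw [EuclideanSpace.inner_eq_star_dotProduct, star_trivial, dotProduct_comm]

@[simp] theorem cross3_self (u : E3) : cross3 u u = 0 := by
  simp [cross3_eq_crossProduct]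

@[simp] theorem cross3_add_left (u v w : E3) : cross3 (u + v) w = cross3 u w + cross3 v w := by
  simp [cross3_eq_crossProduct]

@[simp] theorem cross3_add_right (u v w : E3) : cross3 u (v + w) = cross3 u v + cross3 u w := by
  simp [cross3_eq_crossProduct]

@[simp] theorem cross3_sub_right (u v w : E3) : cross3 u (v - w) = cross3 u v - cross3 u w := by
  simp [cross3_eq_crossProduct]

@[simp] theorem cross3_smul_left (c : ℝ) (u v : E3) : cross3 (c • u) v = c • cross3 u v := by
  simp [cross3_eq_crossProduct]

@[simp] theorem cross3_smul_right (c : ℝ) (u v : E3) : cross3 u (c • v) = c • cross3 u v := by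
  simp [cross3_eq_crossProduct]

theorem cross3_anticomm (u v : E3) : cross3 v u = -cross3 u v := by
  rw [cross3_eq_crossProduct, cross3_eq_crossProduct, ← cross_anticomm, toLp_neg]

theorem inner_cross3_self_left (u v : E3) : ⟪u, cross3 u v⟫ = 0 := by
  simp [E3.inner_eq_dotProduct, cross3_eq_crossProduct, dot_self_cross]

theorem cross3_cross3 (u v w : E3) : cross3 u (cross3 v w) = ⟪u, w⟫ • v - ⟪u, v⟫ • w := by
  simp [E3.inner_eq_dotProduct, cross3_eq_crossProduct, cross_cross_eq_smul_sub_smul',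
    dotProduct_comm]

theorem inner_cross3_cross3 (u v w x : E3) :
    ⟪cross3 u v, cross3 w x⟫ = ⟪u, w⟫ * ⟪v, x⟫ - ⟪u, x⟫ * ⟪v, w⟫ := by
  simp [E3.inner_eq_dotProduct, cross3_eq_crossProduct, cross_dot_cross]

def cross3Bilin : E3 →L[ℝ] E3 →L[ℝ] E3 :=
  let e := (WithLp.linearEquiv 2 ℝ (Fin 3 → ℝ)).toLinearMap
  ((crossProduct.compl₁₂ e e).compr₂ (WithLp.linearEquiv 2 ℝ (Fin 3 → ℝ)).symm.toLinearMap
    ).toContinuousBilinearMap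

theorem HasDerivAt.cross3 {f g : ℝ → E3} {f' g' : E3} {t : ℝ} (hf : HasDerivAt f f' t)
    (hg : HasDerivAt g g' t) :
    HasDerivAt (fun s => cross3 (f s) (g s)) (cross3 (f t) g' + cross3 f' (g t)) t :=
  cross3Bilin.hasDerivAt_of_bilinear (fun _ => hf) (fun _ => hg)

theorem eq_inner_smul_add_inner_smul_add_inner_cross3_smul {a b : E3} (ha : ⟪a, a⟫ = 1)
    (hb : ⟪b, b⟫ = 1) (hab : ⟪a, b⟫ = 0) (w : E3) :
    w = ⟪a, w⟫ • a + ⟪b, w⟫ • b + ⟪cross3 a b, w⟫ • cross3 a b := by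
  set n := cross3 a b
  have hnn : ⟪n, n⟫ = 1 := by rw [inner_cross3_cross3, ha, hb, hab]; ring
  have hna : cross3 n a = b := by rw [cross3_anticomm, cross3_cross3, ha, hab]; simp
  have hnb : cross3 n b = -a := by
    rw [cross3_anticomm, cross3_cross3, hb, real_inner_comm, hab]; simp
  have hnw : cross3 n w = ⟪a, w⟫ • b - ⟪b, w⟫ • a := by
    rw [cross3_anticomm, cross3_cross3]
    simp only [real_inner_comm w]; abel
  have h := cross3_cross3 n n w
  rw [hnw, cross3_sub_right, cross3_smul_right, cross3_smul_right, hna, hnb, hnn, one_smul] at h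
  linear_combination (norm := module) h

theorem HasDerivAt.inner_add_inner_eq_zero {F : Type*} [NormedAddCommGroup F]
    [InnerProductSpace ℝ F] {f g : ℝ → F} {f' g' : F} {c t : ℝ} (hf : HasDerivAt f f' t)
    (hg : HasDerivAt g g' t) (hc : ∀ s, ⟪f s, g s⟫ = c) : ⟪f', g t⟫ + ⟪f t, g'⟫ = 0 := by
  have h := hf.inner ℝ hg
  simp only [hc] at h
  rw [add_comm]
  exact h.unique (hasDerivAt_const t c)

section SphericalFrame

variable {γ : ℝ → E3} {t : ℝ}

theorem deriv_eq_norm_smul_unitTan (γ : ℝ → E3) (t : ℝ) :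
    deriv γ t = ‖deriv γ t‖ • unitTan γ t := by
  by_cases h : deriv γ t = 0
  · simp [h]
  · rw [unitTan, smul_smul, mul_inv_cancel₀ (norm_ne_zero_iff.2 h), one_smul]

theorem inner_unitTan_deriv (γ : ℝ → E3) (t : ℝ) : ⟪unitTan γ t, deriv γ t⟫ = ‖deriv γ t‖ := by
  rw [unitTan, real_inner_smul_left, real_inner_self_eq_norm_sq, sq, ← mul_assoc,
    inv_mul_mul_self]

theorem norm_unitTan (h : deriv γ t ≠ 0) : ‖unitTan γ t‖ = 1 := by
  rw [unitTan, norm_smul, norm_inv, norm_norm, inv_mul_cancel₀ (norm_ne_zero_iff.2 h)]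

theorem contDiff_unitTan (hγ : ContDiff ℝ 2 γ) (hreg : ∀ t, deriv γ t ≠ 0) :
    ContDiff ℝ 1 (unitTan γ) := by
  have hγ' : ContDiff ℝ 1 (deriv γ) := hγ.iterate_deriv' 1 1
  exact ((hγ'.norm ℝ hreg).inv fun t => norm_ne_zero_iff.2 (hreg t)).smul hγ'

theorem contDiff_unitNor (hγ : ContDiff ℝ 2 γ) (hreg : ∀ t, deriv γ t ≠ 0) :
    ContDiff ℝ 1 (unitNor γ) :=
  (cross3Bilin.contDiff.comp (hγ.of_le one_le_two)).clm_apply (contDiff_unitTan hγ hreg)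

theorem inner_apply_deriv_eq_zero (hγ : Differentiable ℝ γ) (hunit : ∀ s, ‖γ s‖ = 1) (t : ℝ) :
    ⟪γ t, deriv γ t⟫ = 0 := by
  have h := (hγ t).hasDerivAt.inner_add_inner_eq_zero (hγ t).hasDerivAt
    fun s => inner_self_eq_one_of_norm_eq_one (hunit s)
  rw [real_inner_comm] at h
  linarith

theorem inner_apply_unitTan_eq_zero (hγ : Differentiable ℝ γ) (hunit : ∀ s, ‖γ s‖ = 1)
    (t : ℝ) : ⟪γ t, unitTan γ t⟫ = 0 := by
  rw [unitTan, real_inner_smul_right, inner_apply_deriv_eq_zero hγ hunit, mul_zero]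

theorem inner_unitNor_self (hγ : Differentiable ℝ γ) (hunit : ∀ s, ‖γ s‖ = 1)
    (hreg : deriv γ t ≠ 0) : ⟪unitNor γ t, unitNor γ t⟫ = 1 := by
  rw [unitNor, inner_cross3_cross3, inner_self_eq_one_of_norm_eq_one (hunit t),
    inner_self_eq_one_of_norm_eq_one (norm_unitTan hreg), inner_apply_unitTan_eq_zero hγ hunit]
  ring

theorem deriv_unitTan (hγ : ContDiff ℝ 2 γ) (hunit : ∀ s, ‖γ s‖ = 1)
    (hreg : ∀ s, deriv γ s ≠ 0) (t : ℝ) :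
    deriv (unitTan γ) t
      = (-‖deriv γ t‖) • γ t + (geodCurv γ t * ‖deriv γ t‖) • unitNor γ t := by
  have hγd : Differentiable ℝ γ := hγ.differentiable two_ne_zero
  have hT : HasDerivAt (unitTan γ) (deriv (unitTan γ) t) t :=
    ((contDiff_unitTan hγ hreg).differentiable one_ne_zero t).hasDerivAt
  have hTT : ∀ s, ⟪unitTan γ s, unitTan γ s⟫ = 1 :=
    fun s => inner_self_eq_one_of_norm_eq_one (norm_unitTan (hreg s))
  have hγT : ∀ s, ⟪γ s, unitTan γ s⟫ = 0 := inner_apply_unitTan_eq_zero hγd hunit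
  have hT'γ : ⟪γ t, deriv (unitTan γ) t⟫ = -‖deriv γ t‖ := by
    have h := hT.inner_add_inner_eq_zero (hγd t).hasDerivAt
      fun s => (real_inner_comm _ _).trans (hγT s)
    rw [real_inner_comm, inner_unitTan_deriv] at h
    linarith
  have hT'T : ⟪unitTan γ t, deriv (unitTan γ) t⟫ = 0 := by
    have h := hT.inner_add_inner_eq_zero hT hTT
    rw [real_inner_comm] at h
    linarith
  have hT'N : ⟪unitNor γ t, deriv (unitTan γ) t⟫ = geodCurv γ t * ‖deriv γ t‖ := by
    rw [geodCurv, div_mul_cancel₀ _ (norm_ne_zero_iff.2 (hreg t)), real_inner_comm]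
  rw [eq_inner_smul_add_inner_smul_add_inner_cross3_smul (inner_self_eq_one_of_norm_eq_one
    (hunit t)) (hTT t) (hγT t) (deriv (unitTan γ) t), ← unitNor, hT'γ, hT'T, hT'N, zero_smul,
    add_zero]

theorem hasDerivAt_unitNor (hγ : ContDiff ℝ 2 γ) (hunit : ∀ s, ‖γ s‖ = 1)
    (hreg : ∀ s, deriv γ s ≠ 0) (t : ℝ) :
    HasDerivAt (unitNor γ) ((-(geodCurv γ t * ‖deriv γ t‖)) • unitTan γ t) t := by
  have hγd : Differentiable ℝ γ := hγ.differentiable two_ne_zero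
  have h : HasDerivAt (unitNor γ) _ t := (hγd t).hasDerivAt.cross3
    ((contDiff_unitTan hγ hreg).differentiable one_ne_zero t).hasDerivAt
  have hγN : cross3 (γ t) (unitNor γ t) = -unitTan γ t := by
    rw [unitNor, cross3_cross3, inner_apply_unitTan_eq_zero hγd hunit,
      inner_self_eq_one_of_norm_eq_one (hunit t)]
    simp
  have hγ'T : cross3 (deriv γ t) (unitTan γ t) = 0 := by
    rw [deriv_eq_norm_smul_unitTan γ t, cross3_smul_left, cross3_self, smul_zero]
  rw [deriv_unitTan hγ hunit hreg, hγ'T] at h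
  convert h using 1
  rw [add_zero, cross3_add_right, cross3_smul_right, cross3_smul_right, cross3_self, hγN]
  module

end SphericalFrame

section Translation

variable {γ : ℝ → E3} {t θ : ℝ}

theorem radCurv_mem_Ioo (γ : ℝ → E3) (t : ℝ) : radCurv γ t ∈ Ioo 0 π := by
  have := arctan_lt_pi_div_two (geodCurv γ t)
  have := neg_pi_div_two_lt_arctan (geodCurv γ t)
  constructor <;> unfold radCurv <;> linarith

theorem sin_radCurv_sub_div_sin_radCurv (γ : ℝ → E3) (t θ : ℝ) :
    sin (radCurv γ t - θ) / sin (radCurv γ t) = cos θ - geodCurv γ t * sin θ := by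
  have hsin : sin (radCurv γ t) ≠ 0 :=
    (sin_pos_of_pos_of_lt_pi (radCurv_mem_Ioo γ t).1 (radCurv_mem_Ioo γ t).2).ne'
  have hcot : cos (radCurv γ t) = geodCurv γ t * sin (radCurv γ t) := by
    rw [radCurv, cos_pi_div_two_sub, sin_pi_div_two_sub, sin_arctan, cos_arctan]
    ring
  rw [sin_sub, hcot]
  field_simp

theorem hasDerivAt_caustic (hγ : ContDiff ℝ 2 γ) (hunit : ∀ s, ‖γ s‖ = 1)
    (hreg : ∀ s, deriv γ s ≠ 0) (θ t : ℝ) :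
    HasDerivAt (fun s => caustic γ s θ)
      ((‖deriv γ t‖ * (cos θ - geodCurv γ t * sin θ)) • unitTan γ t) t := by
  have h : HasDerivAt (fun s => caustic γ s θ) _ t :=
    (((hγ.differentiable two_ne_zero) t).hasDerivAt.const_smul (cos θ)).add
      ((hasDerivAt_unitNor hγ hunit hreg t).const_smul (sin θ))
  refine h.congr_deriv ?_
  linear_combination (norm := module) cos θ • deriv_eq_norm_smul_unitTan γ t

theorem contDiff_caustic (hγ : ContDiff ℝ 2 γ) (hreg : ∀ s, deriv γ s ≠ 0) (θ : ℝ) :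
    ContDiff ℝ 1 (fun s => caustic γ s θ) :=
  ((hγ.of_le one_le_two).const_smul (cos θ)).add ((contDiff_unitNor hγ hreg).const_smul (sin θ))

theorem norm_caustic (hγ : Differentiable ℝ γ) (hunit : ∀ s, ‖γ s‖ = 1)
    (hreg : deriv γ t ≠ 0) (θ : ℝ) : ‖caustic γ t θ‖ = 1 := by
  have hγN : ⟪γ t, unitNor γ t⟫ = 0 := inner_cross3_self_left _ _
  rw [norm_eq_sqrt_real_inner, caustic, real_inner_add_add_self, real_inner_smul_left,
    real_inner_smul_left, real_inner_smul_left, real_inner_smul_right, real_inner_smul_right,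
    real_inner_smul_right, inner_self_eq_one_of_norm_eq_one (hunit t),
    inner_unitNor_self hγ hunit hreg, hγN, ← sqrt_one]
  congr 1
  linear_combination sin_sq_add_cos_sq θ

theorem unitTan_eq_of_hasDerivAt {f : ℝ → E3} {c : ℝ} {u : E3} (hf : HasDerivAt f (c • u) t)
    (hc : 0 < c) (hu : ‖u‖ = 1) : unitTan f t = u := by
  rw [unitTan, hf.deriv, norm_smul, hu, mul_one, norm_of_nonneg hc.le, smul_smul,
    inv_mul_cancel₀ hc.ne', one_smul]

theorem unitNor_caustic (hγ : Differentiable ℝ γ) (hunit : ∀ s, ‖γ s‖ = 1)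
    (hreg : deriv γ t ≠ 0) (hT : unitTan (fun s => caustic γ s θ) t = unitTan γ t) :
    unitNor (fun s => caustic γ s θ) t = (-sin θ) • γ t + cos θ • unitNor γ t := by
  have hNT : cross3 (unitNor γ t) (unitTan γ t) = -γ t := by
    rw [unitNor, cross3_anticomm, cross3_cross3, inner_self_eq_one_of_norm_eq_one
      (norm_unitTan hreg), real_inner_comm, inner_apply_unitTan_eq_zero hγ hunit]
    simp
  rw [unitNor, hT, caustic, cross3_add_left, cross3_smul_left, cross3_smul_left, ← unitNor, hNT]
  module

theorem frameM_caustic (hT : unitTan (fun s => caustic γ s θ) t = unitTan γ t)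
    (hN : unitNor (fun s => caustic γ s θ) t = (-sin θ) • γ t + cos θ • unitNor γ t) :
    frameM (fun s => caustic γ s θ) t
      = frameM γ t * !![cos θ, 0, -sin θ; 0, 1, 0; sin θ, 0, cos θ] := by
  ext i j
  simp only [frameM, Matrix.of_apply, hT, hN]
  fin_cases j <;> simp [caustic, Matrix.mul_apply, Fin.sum_univ_three] <;> ring

theorem Function.Periodic.caustic {c : ℝ} (h : Periodic γ c) (θ : ℝ) :
    Periodic (fun s => caustic γ s θ) c := by
  have hderiv : Periodic (deriv γ) c := fun s => by
    rw [← deriv_comp_add_const, show (fun u => γ (u + c)) = γ from funext h]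
  intro s
  simp only [_root_.caustic, unitNor, unitTan, h s, hderiv s]

end Translation

theorem translation_is_regular_general (ρ₂ ρ₁ θ : ℝ)
    (γ : ℝ → E3) (hγ : IsClosedCurve γ) (hrad : ∀ t, radCurv γ t ∈ Ioo ρ₂ ρ₁)
    (hθ : θ ∈ Icc (ρ₁ - π) ρ₂) :
    ContDiff ℝ 1 (fun t => caustic γ t θ) ∧
    Function.Periodic (fun t => caustic γ t θ) 1 ∧
    ∀ t, ‖caustic γ t θ‖ = 1 ∧
      deriv (fun t' => caustic γ t' θ) t
        = (‖deriv γ t‖ * Real.sin (radCurv γ t - θ) / Real.sin (radCurv γ t))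
            • unitTan γ t ∧
      0 < ‖deriv γ t‖ * Real.sin (radCurv γ t - θ) / Real.sin (radCurv γ t) ∧
      unitTan (fun t' => caustic γ t' θ) t = unitTan γ t ∧
      unitNor (fun t' => caustic γ t' θ) t
        = (-Real.sin θ) • γ t + Real.cos θ • unitNor γ t ∧
      frameM (fun t' => caustic γ t' θ) t
        = frameM γ t * !![Real.cos θ, 0, -Real.sin θ; 0, 1, 0; Real.sin θ, 0, Real.cos θ] := by
  obtain ⟨hC2, hper, hsphere⟩ := hγ
  have hunit : ∀ t, ‖γ t‖ = 1 := fun t => (hsphere t).1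
  have hreg : ∀ t, deriv γ t ≠ 0 := fun t => (hsphere t).2
  have hγd : Differentiable ℝ γ := hC2.differentiable two_ne_zero
  have hpos : ∀ t, 0 < ‖deriv γ t‖ * sin (radCurv γ t - θ) / sin (radCurv γ t) := fun t => by
    have hρθ : 0 < sin (radCurv γ t - θ) :=
      sin_pos_of_pos_of_lt_pi (by linarith [(hrad t).1, hθ.2]) (by linarith [(hrad t).2, hθ.1])
    have hρ : 0 < sin (radCurv γ t) :=
      sin_pos_of_pos_of_lt_pi (radCurv_mem_Ioo γ t).1 (radCurv_mem_Ioo γ t).2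
    exact div_pos (mul_pos (norm_pos_iff.2 (hreg t)) hρθ) hρ
  have hderiv : ∀ t, HasDerivAt (fun s => caustic γ s θ)
      ((‖deriv γ t‖ * sin (radCurv γ t - θ) / sin (radCurv γ t)) • unitTan γ t) t := fun t => by
    rw [mul_div_assoc, sin_radCurv_sub_div_sin_radCurv]
    exact hasDerivAt_caustic hC2 hunit hreg θ t
  have hT : ∀ t, unitTan (fun s => caustic γ s θ) t = unitTan γ t :=
    fun t => unitTan_eq_of_hasDerivAt (hderiv t) (hpos t) (norm_unitTan (hreg t))
  have hN : ∀ t, unitNor (fun s => caustic γ s θ) t = (-sin θ) • γ t + cos θ • unitNor γ t :=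
    fun t => unitNor_caustic hγd hunit (hreg t) (hT t)
  exact ⟨contDiff_caustic hC2 hreg θ, hper.caustic θ, fun t => ⟨norm_caustic hγd hunit (hreg t) θ,
    (hderiv t).deriv, hpos t, hT t, hN t, frameM_caustic (hT t) (hN t)⟩⟩

/-- The translation `γ_θ = cos θ · γ + sin θ · n` of a closed curve with
radius of curvature in `(ρ₂, ρ₁)`, for `θ ∈ [ρ₁ − π, ρ₂]`, is a regular closed curve; its
velocity is the stated positive multiple of `t(t)`, its unit tangent is `t(t)`, its unit
normal is `−sin θ · γ + cos θ · n`, and its frame is `Φ_γ · R_θ`. -/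
theorem translation_is_regular (ρ₂ ρ₁ θ : ℝ) (hρ₂ : 0 ≤ ρ₂) (hρ : ρ₂ < ρ₁) (hρ₁ : ρ₁ ≤ π)
    (γ : ℝ → E3) (hγ : IsClosedCurve γ) (hrad : ∀ t, radCurv γ t ∈ Ioo ρ₂ ρ₁)
    (hθ : θ ∈ Icc (ρ₁ - π) ρ₂) :
    ContDiff ℝ 1 (fun t => caustic γ t θ) ∧
    Function.Periodic (fun t => caustic γ t θ) 1 ∧
    ∀ t, ‖caustic γ t θ‖ = 1 ∧
      deriv (fun t' => caustic γ t' θ) t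
        = (‖deriv γ t‖ * Real.sin (radCurv γ t - θ) / Real.sin (radCurv γ t))
            • unitTan γ t ∧
      0 < ‖deriv γ t‖ * Real.sin (radCurv γ t - θ) / Real.sin (radCurv γ t) ∧
      unitTan (fun t' => caustic γ t' θ) t = unitTan γ t ∧
      unitNor (fun t' => caustic γ t' θ) t
        = (-Real.sin θ) • γ t + Real.cos θ • unitNor γ t ∧
      frameM (fun t' => caustic γ t' θ) t
        = frameM γ t * !![Real.cos θ, 0, -Real.sin θ; 0, 1, 0; Real.sin θ, 0, Real.cos θ] :=
  translation_is_regular_general ρ₂ ρ₁ θ γ hγ hrad hθ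
end
end

section
/- Identify ℝ³ with the purely imaginary quaternions inside ℍ ≅ ℝ⁴. Let z : ℝ → ℍ be a differentiable curve with |z(t)| = 1 for all t, and for each t let Φ(t) ∈ SO(3) be the rotation of the imaginary quaternions given by v ↦ z(t) · v · z(t)⁻¹ (which equals z(t) · v · conj(z(t)) since |z(t)| = 1). Then for every t, the Frobenius norm of the matrix Φ'(t) (the square root of the sum of the squares of its nine entries) equals 2√2 · |z'(t)|. In other words, the covering map π : S³ → SO(3), π(z)v = z v z̄, satisfies π*⟨·,·⟩ = 8⟨·,·⟩, where SO(3) carries the metric inherited from ℝ⁹ and S³ the round metric inherited from ℝ⁴. -/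
/-!
Differentiating `Φ(s) v = z(s) v z̄(s)` gives `Φ'(t) v = Im (z' v z̄ + z v z̄')`. For arbitrary
quaternions `z, w`, a direct computation shows that the squared Frobenius norm of
`v ↦ Im (w v z̄ + z v w̄)` is `8 |z|² |w|² + 4 ⟪z, w⟫²`. Along a curve of unit quaternions
`|z| = 1` and `⟪z, z'⟫ = 0`, which leaves `8 |z'|²`.
-/

noncomputable section

open Real

/-- The imaginary coordinates of a quaternion, identifying the purely imaginary
quaternions with `ℝ³`. -/
def imCoords (q : Quaternion ℝ) : Fin 3 → ℝ := ![q.imI, q.imJ, q.imK]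

/-- The imaginary basis quaternions `i, j, k`. -/
def quatBasis : Fin 3 → Quaternion ℝ := ![⟨0, 1, 0, 0⟩, ⟨0, 0, 1, 0⟩, ⟨0, 0, 0, 1⟩]

/-- The rotation of the imaginary quaternions `v ↦ z v z̄` induced by a unit quaternion `z`,
written as a `3 × 3` real matrix. -/
def quatRot (z : Quaternion ℝ) : Matrix (Fin 3) (Fin 3) ℝ :=
  Matrix.of fun i j => imCoords (z * quatBasis j * star z) i

open scoped RealInnerProductSpace

instance Quaternion.instStarModuleOfTrivialStar {R : Type*} [CommRing R] [StarRing R]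
    [TrivialStar R] : StarModule R (Quaternion R) :=
  ⟨fun r a => by rw [star_trivial r]; exact Quaternion.star_smul r a⟩

theorem HasDerivAt.inner_eq_zero_of_norm_eq {F : Type*} [NormedAddCommGroup F]
    [InnerProductSpace ℝ F] {f : ℝ → F} {f' : F} {t c : ℝ} (hf : HasDerivAt f f' t)
    (hc : ∀ᶠ s in nhds t, ‖f s‖ = c) : ⟪f t, f'⟫ = 0 := by
  have hconst : HasDerivAt (‖f ·‖ ^ 2) 0 t :=
    (hasDerivAt_const t (c ^ 2)).congr_of_eventuallyEq (hc.mono fun s hs => by simp [hs])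
  simpa using hf.norm_sq.unique hconst

theorem HasDerivAt.imCoords {f : ℝ → Quaternion ℝ} {f' : Quaternion ℝ} {t : ℝ}
    (hf : HasDerivAt f f' t) : HasDerivAt (fun s => imCoords (f s)) (imCoords f') t := by
  let L : Quaternion ℝ →ₗ[ℝ] Fin 3 → ℝ := LinearMap.pi ![QuaternionAlgebra.imIₗ _ _ _,
    QuaternionAlgebra.imJₗ _ _ _, QuaternionAlgebra.imKₗ _ _ _]
  have hL : ⇑L = _root_.imCoords := by
    funext q i
    fin_cases i <;> rfl
  have h := L.toContinuousLinearMap.hasFDerivAt.comp_hasDerivAt t hf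
  rwa [LinearMap.coe_toContinuousLinearMap', hL] at h

def quatRotDeriv (z w : Quaternion ℝ) : Matrix (Fin 3) (Fin 3) ℝ :=
  Matrix.of fun i j => imCoords (w * quatBasis j * star z + z * quatBasis j * star w) i

theorem HasDerivAt.quatRot_apply {z : ℝ → Quaternion ℝ} {w : Quaternion ℝ} {t : ℝ}
    (hz : HasDerivAt z w t) (i j : Fin 3) :
    HasDerivAt (fun s => quatRot (z s) i j) (quatRotDeriv (z t) w i j) t :=
  hasDerivAt_pi.1 ((hz.mul_const (quatBasis j)).mul hz.star).imCoords i

theorem sum_sq_quatRotDeriv (z w : Quaternion ℝ) :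
    ∑ i, ∑ j, quatRotDeriv z w i j ^ 2 = 8 * ‖z‖ ^ 2 * ‖w‖ ^ 2 + 4 * ⟪z, w⟫ ^ 2 := by
  rw [sq ‖z‖, sq ‖w‖, ← Quaternion.normSq_eq_norm_mul_self, ← Quaternion.normSq_eq_norm_mul_self,
    Quaternion.normSq_def', Quaternion.normSq_def', Quaternion.inner_def]
  simp only [quatRotDeriv, Matrix.of_apply, imCoords, quatBasis, Fin.sum_univ_three,
    Matrix.cons_val, Quaternion.imI_add, Quaternion.imJ_add, Quaternion.imK_add,
    Quaternion.imI_mul, Quaternion.imJ_mul, Quaternion.imK_mul, Quaternion.re_mul,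
    Quaternion.re_star, Quaternion.imI_star, Quaternion.imJ_star, Quaternion.imK_star]
  ring

/-- For a differentiable curve `z` of unit quaternions, the Frobenius norm
of the derivative of the associated curve of rotations `Φ(t) = quatRot (z t)` equals
`2√2 · |z'(t)|`; i.e. the covering map `π : S³ → SO(3)` satisfies `π*⟨·,·⟩ = 8⟨·,·⟩`. -/
theorem frobenius_norm_deriv_quatRot (z : ℝ → Quaternion ℝ) (hz : Differentiable ℝ z)
    (hnorm : ∀ t, ‖z t‖ = 1) (t : ℝ) :
    Real.sqrt (∑ i : Fin 3, ∑ j : Fin 3, (deriv (fun s => quatRot (z s) i j) t) ^ 2)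
      = 2 * Real.sqrt 2 * ‖deriv z t‖ := by
  have hz' : HasDerivAt z (deriv z t) t := (hz t).hasDerivAt
  have horth : ⟪z t, deriv z t⟫ = 0 :=
    hz'.inner_eq_zero_of_norm_eq (Filter.Eventually.of_forall hnorm)
  simp only [fun i j => (hz'.quatRot_apply i j).deriv, sum_sq_quatRotDeriv, hnorm, horth]
  rw [show 8 * 1 ^ 2 * ‖deriv z t‖ ^ 2 + 4 * 0 ^ 2 = (2 * √2 * ‖deriv z t‖) ^ 2 by
    rw [mul_pow, mul_pow, sq_sqrt zero_le_two]; ring]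
  exact sqrt_sq (by positivity)
end
end

section
/- Let λ₂, λ₄, λ₆ ∈ [0, π/2] satisfy λ₂ + λ₄ + λ₆ = π, and let ρ₀ ∈ (0, π/2]. Then arcsin(cos ρ₀ · sin λ₂) + arcsin(cos ρ₀ · sin λ₄) + arcsin(cos ρ₀ · sin λ₆) ≥ π − 2ρ₀. -/
/-!
For `0 ≤ c < 1` the function `x ↦ arcsin (c sin x)` is concave on `[0, π/2]`: its derivative
`c cos x / √(1 - c² sin² x)` decreases there. It therefore lies above its chord, which joins
`(0, 0)` to `(π/2, arcsin c)`, so `arcsin (c sin x) ≥ (2x/π) arcsin c`. With `c = cos ρ₀`,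
`arcsin c = π/2 - ρ₀`, and summing over `x = λ₂, λ₄, λ₆` (whose sum is `π`) gives `π - 2ρ₀`.
-/

open Real Set

theorem ConcaveOn.secant_le {f : ℝ → ℝ} {a b x : ℝ} (hf : ConcaveOn ℝ (Icc a b) f)
    (hx : x ∈ Icc a b) : f a + (x - a) / (b - a) * (f b - f a) ≤ f x := by
  rcases (hx.1.trans hx.2).eq_or_lt with rfl | hab
  · obtain rfl : x = a := le_antisymm hx.2 hx.1
    simp
  have hw : b - a ≠ 0 := (sub_pos.2 hab).ne'
  have key := hf.2 (left_mem_Icc.2 hab.le) (right_mem_Icc.2 hab.le)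
    (div_nonneg (sub_nonneg.2 hx.2) (sub_pos.2 hab).le)
    (div_nonneg (sub_nonneg.2 hx.1) (sub_pos.2 hab).le) (by field_simp; ring)
  have hpt : ((b - x) / (b - a)) • a + ((x - a) / (b - a)) • b = x := by
    simp only [smul_eq_mul]; field_simp; ring
  rw [hpt, smul_eq_mul, smul_eq_mul] at key
  calc f a + (x - a) / (b - a) * (f b - f a)
      = (b - x) / (b - a) * f a + (x - a) / (b - a) * f b := by field_simp; ring
    _ ≤ f x := key

theorem hasDerivAt_arcsin_mul_sin {c : ℝ} (hc : |c| < 1) (x : ℝ) :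
    HasDerivAt (fun x => arcsin (c * sin x)) (c * (cos x / √(1 - (c * sin x) ^ 2))) x := by
  have hlt : |c * sin x| < 1 := by
    rw [abs_mul]
    exact (mul_le_of_le_one_right (abs_nonneg c) (abs_sin_le_one x)).trans_lt hc
  have h := (hasDerivAt_arcsin (abs_lt.1 hlt).1.ne' (abs_lt.1 hlt).2.ne).comp x
    ((hasDerivAt_sin x).const_mul c)
  exact h.congr_deriv (by ring)

theorem antitoneOn_cos_div_sqrt_one_sub_sq_mul_sin {c : ℝ} (hc : |c| < 1) :
    AntitoneOn (fun x => cos x / √(1 - (c * sin x) ^ 2)) (Icc 0 (π / 2)) := by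
  intro a ha b hb hab
  have hc2 : c ^ 2 < 1 := (sq_lt_one_iff_abs_lt_one c).2 hc
  have hpos (x : ℝ) : 0 < 1 - (c * sin x) ^ 2 := by
    nlinarith [sin_sq_le_one x, sq_nonneg c, mul_pow c (sin x) 2]
  have hsa : 0 ≤ sin a := sin_nonneg_of_nonneg_of_le_pi ha.1 (by linarith [ha.2, pi_pos])
  have hsab : sin a ≤ sin b :=
    sin_le_sin_of_le_of_le_pi_div_two (by linarith [ha.1, pi_pos]) hb.2 hab
  have hca : 0 ≤ cos a := cos_nonneg_of_mem_Icc ⟨by linarith [ha.1, pi_pos], ha.2⟩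
  have hcb : 0 ≤ cos b := cos_nonneg_of_mem_Icc ⟨by linarith [hb.1, pi_pos], hb.2⟩
  dsimp only
  rw [div_le_div_iff₀ (sqrt_pos.2 (hpos b)) (sqrt_pos.2 (hpos a)),
    ← sq_le_sq₀ (by positivity) (by positivity), mul_pow (cos b), mul_pow (cos a),
    sq_sqrt (hpos a).le, sq_sqrt (hpos b).le, cos_sq', cos_sq']
  -- the difference of the two sides is `(1 - c²) (sin² b - sin² a)`
  nlinarith [mul_le_mul hsab hsab hsa (hsa.trans hsab)]

theorem concaveOn_arcsin_mul_sin {c : ℝ} (hc₀ : 0 ≤ c) (hc₁ : c < 1) :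
    ConcaveOn ℝ (Icc 0 (π / 2)) (fun x => arcsin (c * sin x)) := by
  have hc : |c| < 1 := abs_lt.2 ⟨by linarith, hc₁⟩
  have hderiv : deriv (fun x => arcsin (c * sin x)) =
      fun x => c * (cos x / √(1 - (c * sin x) ^ 2)) :=
    funext fun x => (hasDerivAt_arcsin_mul_sin hc x).deriv
  refine AntitoneOn.concaveOn_of_deriv (convex_Icc _ _) (by fun_prop)
    (fun x _ => (hasDerivAt_arcsin_mul_sin hc x).differentiableAt.differentiableWithinAt) ?_
  rw [hderiv, interior_Icc]
  exact fun a ha b hb hab => mul_le_mul_of_nonneg_left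
    (antitoneOn_cos_div_sqrt_one_sub_sq_mul_sin hc (Ioo_subset_Icc_self ha)
      (Ioo_subset_Icc_self hb) hab) hc₀

theorem mul_arcsin_le_arcsin_mul_sin {c x : ℝ} (hc₀ : 0 ≤ c) (hc₁ : c < 1)
    (hx : x ∈ Icc 0 (π / 2)) : 2 * x / π * arcsin c ≤ arcsin (c * sin x) := by
  have h := (concaveOn_arcsin_mul_sin hc₀ hc₁).secant_le hx
  simp only [sin_zero, mul_zero, arcsin_zero, sin_pi_div_two, mul_one, zero_add, sub_zero] at h
  convert h using 2
  field_simp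

/-- If `λ₂ + λ₄ + λ₆ = π` with each `λᵢ ∈ [0, π/2]`, and `ρ₀ ∈ (0, π/2]`,
then `arcsin(cos ρ₀ sin λ₂) + arcsin(cos ρ₀ sin λ₄) + arcsin(cos ρ₀ sin λ₆) ≥ π − 2ρ₀`. -/
theorem arcsin_sum_ge (l₂ l₄ l₆ ρ₀ : ℝ)
    (h₂ : l₂ ∈ Icc (0:ℝ) (π / 2)) (h₄ : l₄ ∈ Icc (0:ℝ) (π / 2))
    (h₆ : l₆ ∈ Icc (0:ℝ) (π / 2)) (hsum : l₂ + l₄ + l₆ = π)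
    (hρ₀ : ρ₀ ∈ Ioc (0:ℝ) (π / 2)) :
    π - 2 * ρ₀ ≤
      arcsin (cos ρ₀ * sin l₂) + arcsin (cos ρ₀ * sin l₄) + arcsin (cos ρ₀ * sin l₆) := by
  obtain ⟨hρ₀_pos, hρ₀_le⟩ := hρ₀
  have hc₀ : 0 ≤ cos ρ₀ := cos_nonneg_of_mem_Icc ⟨by linarith [pi_pos], hρ₀_le⟩
  have hc₁ : cos ρ₀ < 1 := by
    simpa using cos_lt_cos_of_nonneg_of_le_pi le_rfl (by linarith [pi_pos]) hρ₀_pos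
  have harcsin : arcsin (cos ρ₀) = π / 2 - ρ₀ := by
    rw [← sin_pi_div_two_sub, arcsin_sin (by linarith [pi_pos]) (by linarith)]
  calc π - 2 * ρ₀
      = 2 * l₂ / π * arcsin (cos ρ₀) + 2 * l₄ / π * arcsin (cos ρ₀)
        + 2 * l₆ / π * arcsin (cos ρ₀) := by
        rw [harcsin]; field_simp; linear_combination (2 * ρ₀ - π) * hsum
    _ ≤ _ := by
      gcongr <;> exact mul_arcsin_le_arcsin_mul_sin hc₀ hc₁ ‹_›
end

section
/- Let E be a real separable Hilbert space, D ⊆ E a dense linear subspace, V ⊆ E an open set, h : V → ℝⁿ a map of class C¹ whose derivative is surjective at every point of V, L = h⁻¹(0), and U an open subset of L in the subspace topology. Then for every k ∈ ℕ and every continuous map f : Sᵏ → U, there is a continuous homotopy F : [0,1] × Sᵏ → U with F(0,·) = f and F(1, Sᵏ) ⊆ D ∩ U. In particular, the set inclusion D ∩ U ↪ U induces surjections on all homotopy groups. -/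
/-!
Near a compact piece `K` of `L = h⁻¹(0)`, pick at each point a right inverse of `Dh` with range in
the dense subspace `D` (possible since `D` maps onto the finite-dimensional target); being an
approximate right inverse on a uniform neighbourhood is a convex condition, so these glue by a
partition of unity into a continuous family `R y`. The simplified Newton iteration
`w ↦ w - h (y + R y w)` is then a uniform contraction for `y` near `K`, and its fixed point gives a
continuous retraction `ρ y = y + R y (w y)` onto `L` that moves points only within `D` and fixes
`L`. Finally approximate `f` by a `D`-valued map `g` and push the segment from `f` to `g` onto `L`
with `ρ`.
-/

open Set Metric Filter Topology

theorem exists_fixedPoint_mem_closedBall {X : Type*} [MetricSpace X] [CompleteSpace X]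
    {T : X → X} {x₀ : X} {r : ℝ} {K : NNReal} (hK : K < 1)
    (hT : ∀ w ∈ closedBall x₀ r, ∀ w' ∈ closedBall x₀ r, dist (T w) (T w') ≤ K * dist w w')
    (hT₀ : dist (T x₀) x₀ ≤ (1 - K) * r) :
    ∃ w ∈ closedBall x₀ r, T w = w := by
  have hK' : (K : ℝ) < 1 := hK
  have hr : 0 ≤ r := nonneg_of_mul_nonneg_right (dist_nonneg.trans hT₀) (by linarith)
  have hx₀ : x₀ ∈ closedBall x₀ r := mem_closedBall_self hr
  have hmaps : MapsTo T (closedBall x₀ r) (closedBall x₀ r) := fun w hw => by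
    calc dist (T w) x₀ ≤ dist (T w) (T x₀) + dist (T x₀) x₀ := dist_triangle _ _ _
      _ ≤ K * r + (1 - K) * r := by
          gcongr
          · exact (hT w hw x₀ hx₀).trans (by gcongr; exact hw)
      _ = r := by ring
  have hcontr : ContractingWith K (hmaps.restrict T _ _) :=
    ⟨hK, LipschitzWith.of_dist_le_mul fun a b => hT a a.2 b b.2⟩
  obtain ⟨w, hw, hfix, -⟩ := hcontr.exists_fixedPoint' isClosed_closedBall.isComplete hmaps hx₀
    (edist_ne_top _ _)
  exact ⟨w, hw, hfix⟩

theorem exists_continuousOn_fixedPoint_mem_closedBall {Y X : Type*} [TopologicalSpace Y]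
    [MetricSpace X] [CompleteSpace X] {S : Set Y} {T : Y → X → X} {x₀ : X} {r : ℝ}
    {K : NNReal} (hK : K < 1)
    (hT : ∀ y ∈ S, ∀ w ∈ closedBall x₀ r, ∀ w' ∈ closedBall x₀ r,
      dist (T y w) (T y w') ≤ K * dist w w')
    (hT₀ : ∀ y ∈ S, dist (T y x₀) x₀ ≤ (1 - K) * r)
    (hTc : ∀ w ∈ closedBall x₀ r, ContinuousOn (T · w) S) :
    ∃ φ : Y → X, ContinuousOn φ S ∧ ∀ y ∈ S, φ y ∈ closedBall x₀ r ∧ T y (φ y) = φ y ∧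
      ∀ w ∈ closedBall x₀ r, T y w = w → w = φ y := by
  have hK' : (0 : ℝ) < 1 - K := sub_pos.2 hK
  have : Nonempty X := ⟨x₀⟩
  choose! φ hφ hφT using fun y (hy : y ∈ S) =>
    exists_fixedPoint_mem_closedBall hK (hT y hy) (hT₀ y hy)
  have hdist : ∀ y ∈ S, ∀ w ∈ closedBall x₀ r,
      dist w (φ y) ≤ dist (T y w) w / (1 - K) := by
    intro y hy w hw
    rw [le_div_iff₀ hK']
    have hcontr := hT y hy w hw (φ y) (hφ y hy)
    have htri := dist_triangle w (T y w) (φ y)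
    rw [hφT y hy] at hcontr
    rw [dist_comm w (T y w)] at htri
    linarith
  refine ⟨φ, fun y₀ hy₀ => ?_, fun y hy => ⟨hφ y hy, hφT y hy, fun w hw hTw => ?_⟩⟩
  · have hlim : Tendsto (fun y => dist (T y (φ y₀)) (φ y₀) / (1 - K)) (𝓝[S] y₀) (𝓝 0) := by
      have := ((hTc _ (hφ y₀ hy₀) y₀ hy₀).tendsto.dist
        (tendsto_const_nhds (x := φ y₀))).div_const (1 - (K : ℝ))
      simpa [hφT y₀ hy₀] using this
    rw [ContinuousWithinAt, tendsto_iff_dist_tendsto_zero]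
    refine squeeze_zero' (Eventually.of_forall fun y => dist_nonneg) ?_ hlim
    filter_upwards [self_mem_nhdsWithin] with y hy
    simpa [dist_comm] using hdist y hy _ (hφ y₀ hy₀)
  · simpa [hTw] using hdist y hy w hw

theorem exists_continuousMap_mem_dist_lt_of_dense {X E : Type*} [TopologicalSpace X]
    [NormalSpace X] [ParacompactSpace X] [NormedAddCommGroup E] [NormedSpace ℝ E] {D : Set E}
    (hDc : Convex ℝ D) (hD : Dense D) (f : C(X, E)) {ε : ℝ} (hε : 0 < ε) :
    ∃ g : C(X, E), ∀ x, g x ∈ D ∧ dist (g x) (f x) < ε := by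
  refine exists_continuous_forall_mem_convex_of_local_const
    (t := fun x => D ∩ ball (f x) ε) (fun x => hDc.inter (convex_ball _ _)) fun x => ?_
  obtain ⟨d, hdD, hd⟩ := hD.exists_dist_lt (f x) hε
  refine ⟨d, ?_⟩
  have : ∀ᶠ y in 𝓝 x, dist (f y) d < ε :=
    (f.continuous.dist continuous_const).continuousAt.eventually_lt continuousAt_const
      (by simpa [dist_comm] using hd)
  filter_upwards [this] with y hy
  exact ⟨hdD, by rwa [mem_ball, dist_comm]⟩

theorem IsCompact.exists_finset_eventually_closedBall_subset_ball {X : Type*}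
    [PseudoMetricSpace X] {K : Set X} (hK : IsCompact K) {t : X → ℝ} (ht : ∀ c ∈ K, 0 < t c) :
    ∃ s : Finset X, (∀ c ∈ s, c ∈ K) ∧ ∃ δ > 0, ∀ y₀ ∈ thickening δ K,
      ∃ c ∈ s, ∀ᶠ y in 𝓝 y₀, closedBall y δ ⊆ ball c (t c) := by
  obtain ⟨s, hsK, hKs⟩ := hK.elim_nhds_subcover (fun c => ball c (t c))
    fun c hc => ball_mem_nhds c (ht c hc)
  obtain ⟨δ, hδ, hleb⟩ := lebesgue_number_lemma_of_metric hK
    (c := fun c : s => ball (c : X) (t c)) (fun _ => isOpen_ball) fun x hx => by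
      obtain ⟨c, hc, hxc⟩ := mem_iUnion₂.1 (hKs hx)
      exact mem_iUnion.2 ⟨⟨c, hc⟩, hxc⟩
  refine ⟨s, hsK, δ / 2, half_pos hδ, fun y₀ hy₀ => ?_⟩
  obtain ⟨x, hxK, hy₀x⟩ := mem_thickening_iff.1 hy₀
  obtain ⟨⟨c, hc⟩, hxc⟩ := hleb x hxK
  refine ⟨c, hc, (isOpen_ball.eventually_mem (mem_ball.2 hy₀x)).mono fun y hy ξ hξ => hxc ?_⟩
  rw [mem_ball] at hy ⊢
  linarith [dist_triangle ξ y x, mem_closedBall.1 hξ]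

section

variable {E F : Type*} [NormedAddCommGroup E] [NormedSpace ℝ E] [NormedAddCommGroup F]
  [NormedSpace ℝ F]

theorem ContinuousLinearMap.exists_rightInverse_mem_of_dense [FiniteDimensional ℝ F]
    {D : Submodule ℝ E} (hD : Dense (D : Set E)) (A : E →L[ℝ] F) (hA : Function.Surjective A) :
    ∃ R : F →L[ℝ] E, A ∘L R = .id ℝ F ∧ ∀ v, R v ∈ D := by
  have hrange : (A ∘L D.subtypeL).range = ⊤ := by
    have hdense : Dense ((A ∘L D.subtypeL).range : Set F) := by
      rw [LinearMap.coe_range, ContinuousLinearMap.coe_coe, ContinuousLinearMap.coe_comp,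
        Set.range_comp]
      simpa using hA.denseRange.dense_image A.continuous hD
    exact SetLike.coe_injective <| by
      simpa using (Submodule.closed_of_finiteDimensional _).closure_eq.symm.trans hdense.closure_eq
  obtain ⟨S, hS⟩ := (A ∘L D.subtypeL).exists_rightInverse_of_surjective hrange
  exact ⟨D.subtypeL ∘L S, hS, fun v => (S v).2⟩

theorem convex_setOf_approxRightInverse (D : Submodule ℝ E) (M : ℝ) (S : Set E)
    (A : E → E →L[ℝ] F) (ε : ℝ) :
    Convex ℝ {R : F →L[ℝ] E | (∀ v, R v ∈ D) ∧ ‖R‖ ≤ M ∧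
      ∀ ξ ∈ S, ‖A ξ ∘L R - ContinuousLinearMap.id ℝ F‖ ≤ ε} := by
  intro R₁ h₁ R₂ h₂ a b ha hb hab
  refine ⟨fun v => D.add_mem (D.smul_mem a (h₁.1 v)) (D.smul_mem b (h₂.1 v)), ?_, fun ξ hξ => ?_⟩
  · simpa using (convex_closedBall (0 : F →L[ℝ] E) M) (by simpa using h₁.2.1)
      (by simpa using h₂.2.1) ha hb hab
  · have hsplit : A ξ ∘L (a • R₁ + b • R₂) - ContinuousLinearMap.id ℝ F =
        a • (A ξ ∘L R₁ - .id ℝ F) + b • (A ξ ∘L R₂ - .id ℝ F) := by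
      simp only [ContinuousLinearMap.comp_add, ContinuousLinearMap.comp_smul]
      linear_combination (norm := module) hab • ContinuousLinearMap.id ℝ F
    rw [hsplit]
    simpa using (convex_closedBall (0 : F →L[ℝ] F) ε)
      (by simpa using h₁.2.2 ξ hξ) (by simpa using h₂.2.2 ξ hξ) ha hb hab

theorem exists_approxRightInverse_mem_on_ball [FiniteDimensional ℝ F] {D : Submodule ℝ E}
    (hD : Dense (D : Set E)) {A : E → E →L[ℝ] F} {c : E} (hA : ContinuousAt A c)
    (hsurj : Function.Surjective (A c)) {V : Set E} (hV : V ∈ 𝓝 c) :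
    ∃ R : F →L[ℝ] E, (∀ v, R v ∈ D) ∧
      ∃ t > 0, ∀ ξ ∈ ball c t, ξ ∈ V ∧ ‖A ξ ∘L R - .id ℝ F‖ ≤ 1 / 2 := by
  obtain ⟨R, hAR, hRD⟩ := (A c).exists_rightInverse_mem_of_dense hD hsurj
  have hlim : Tendsto (fun ξ => A ξ ∘L R) (𝓝 c) (𝓝 (.id ℝ F)) :=
    hAR ▸ (hA.clm_comp continuousAt_const).tendsto
  have hnear : ∀ᶠ ξ in 𝓝 c, ξ ∈ V ∧ ‖A ξ ∘L R - .id ℝ F‖ ≤ 1 / 2 :=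
    Filter.inter_mem hV <| (hlim.eventually (closedBall_mem_nhds _ one_half_pos)).mono
      fun ξ hξ => by rwa [← dist_eq_norm]
  exact ⟨R, hRD, Metric.eventually_nhds_iff_ball.1 hnear⟩

theorem exists_continuousOn_approxRightInverse_near_compact [FiniteDimensional ℝ F]
    {D : Submodule ℝ E} (hD : Dense (D : Set E)) {A : E → E →L[ℝ] F} {K V : Set E}
    (hK : IsCompact K) (hV : IsOpen V) (hKV : K ⊆ V) (hA : ∀ x ∈ K, ContinuousAt A x)
    (hsurj : ∀ x ∈ K, Function.Surjective (A x)) :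
    ∃ Ω, IsOpen Ω ∧ K ⊆ Ω ∧ ∃ τ > 0, ∃ M, ∃ R : E → F →L[ℝ] E, ContinuousOn R Ω ∧
      ∀ y ∈ Ω, (∀ v, R y v ∈ D) ∧ ‖R y‖ ≤ M ∧
        ∀ ξ ∈ closedBall y τ, ξ ∈ V ∧ ‖A ξ ∘L R y - .id ℝ F‖ ≤ 1 / 2 := by
  choose! R₀ hR₀D t ht hR₀t using fun c hc =>
    exists_approxRightInverse_mem_on_ball hD (hA c hc) (hsurj c hc) (hV.mem_nhds (hKV hc))
  obtain ⟨s, hsK, δ, hδ, hnear⟩ := hK.exists_finset_eventually_closedBall_subset_ball ht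
  set M := ∑ c ∈ s, ‖R₀ c‖
  obtain ⟨g, hg⟩ := exists_continuous_forall_mem_convex_of_local_const
    (X := thickening δ K) (t := fun y => {R | (∀ v, R v ∈ D) ∧ ‖R‖ ≤ M ∧
      ∀ ξ ∈ closedBall (y : E) δ, ‖A ξ ∘L R - ContinuousLinearMap.id ℝ F‖ ≤ 1 / 2})
    (fun y => convex_setOf_approxRightInverse D M _ A (1 / 2))
    fun y => by
      obtain ⟨c, hc, hcy⟩ := hnear y y.2
      refine ⟨R₀ c, (continuous_subtype_val.tendsto y).eventually hcy |>.mono fun y' hy' => ?_⟩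
      exact ⟨hR₀D c (hsK c hc), Finset.single_le_sum (fun c _ => norm_nonneg (R₀ c)) hc,
        fun ξ hξ => (hR₀t c (hsK c hc) ξ (hy' hξ)).2⟩
  classical
  refine ⟨thickening δ K, isOpen_thickening, self_subset_thickening hδ K, δ, hδ, M,
    fun y => if hy : y ∈ thickening δ K then g ⟨y, hy⟩ else 0, ?_, fun y hy => ?_⟩
  · rw [continuousOn_iff_continuous_domRestrict]
    convert g.continuous
    ext ⟨y, hy⟩
    simp [hy]
  · obtain ⟨hRD, hRM, hRA⟩ := hg ⟨y, hy⟩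
    obtain ⟨c, hc, hcy⟩ := hnear y hy
    simp only [dif_pos hy]
    exact ⟨hRD, hRM, fun ξ hξ => ⟨(hR₀t c (hsK c hc) ξ (hcy.self_of_nhds hξ)).1, hRA ξ hξ⟩⟩

theorem exists_continuousOn_newton_correction [CompleteSpace F] {h : E → F}
    {A : E → E →L[ℝ] F} {R : E → F →L[ℝ] E} {Ω : Set E} {τ r : ℝ}
    (hR : ContinuousOn R Ω) (hRr : ∀ y ∈ Ω, ‖R y‖ * r ≤ τ)
    (hA : ∀ y ∈ Ω, ∀ ξ ∈ closedBall y τ,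
      HasFDerivAt h (A ξ) ξ ∧ ‖A ξ ∘L R y - .id ℝ F‖ ≤ 1 / 2) :
    ∃ w : E → F, ContinuousOn w {y ∈ Ω | ‖h y‖ ≤ r / 2} ∧ ∀ y ∈ Ω, ‖h y‖ ≤ r / 2 →
      y + R y (w y) ∈ closedBall y τ ∧ h (y + R y (w y)) = 0 ∧ (h y = 0 → w y = 0) := by
  have hmem : ∀ y ∈ Ω, ∀ w ∈ closedBall (0 : F) r, y + R y w ∈ closedBall y τ := by
    intro y hy w hw
    rw [mem_closedBall, dist_self_add_left]
    exact ((R y).le_opNorm w).trans <|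
      (mul_le_mul_of_nonneg_left (mem_closedBall_zero_iff.1 hw) (norm_nonneg _)).trans (hRr y hy)
  set T : E → F → F := fun y w => w - h (y + R y w)
  have hTlip : ∀ y ∈ Ω, ∀ w ∈ closedBall (0 : F) r, ∀ w' ∈ closedBall (0 : F) r,
      dist (T y w) (T y w') ≤ (1 / 2 : NNReal) * dist w w' := by
    intro y hy w hw w' hw'
    have hderiv : ∀ u ∈ closedBall (0 : F) r, HasFDerivWithinAt (T y)
        (.id ℝ F - A (y + R y u) ∘L R y) (closedBall 0 r) u := fun u hu =>
      ((hasFDerivAt_id u).sub (((hA y hy _ (hmem y hy u hu)).1).comp u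
        ((R y).hasFDerivAt.const_add y))).hasFDerivWithinAt
    have hbound : ∀ u ∈ closedBall (0 : F) r, ‖.id ℝ F - A (y + R y u) ∘L R y‖ ≤ 1 / 2 :=
      fun u hu => norm_sub_rev (E := F →L[ℝ] F) _ _ ▸ (hA y hy _ (hmem y hy u hu)).2
    rw [dist_eq_norm, dist_eq_norm]
    simpa using (convex_closedBall (0 : F) r).norm_image_sub_le_of_norm_hasFDerivWithin_le
      hderiv hbound hw' hw
  have hT₀ : ∀ y ∈ {y ∈ Ω | ‖h y‖ ≤ r / 2}, dist (T y 0) 0 ≤ (1 - (1 / 2 : NNReal)) * r := by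
    rintro y ⟨-, hy⟩
    norm_num [T]
    linarith
  have hTc : ∀ w ∈ closedBall (0 : F) r, ContinuousOn (T · w) {y ∈ Ω | ‖h y‖ ≤ r / 2} := by
    intro w hw y hy
    have hshift : ContinuousWithinAt (fun y => y + R y w) {y ∈ Ω | ‖h y‖ ≤ r / 2} y :=
      continuousWithinAt_id.add <|
        (hR y hy.1).mono (sep_subset _ _) |>.clm_apply continuousWithinAt_const
    exact continuousWithinAt_const.sub
      (ContinuousAt.comp_continuousWithinAt (f := fun y => y + R y w)
        (hA y hy.1 _ (hmem y hy.1 w hw)).1.continuousAt hshift)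
  obtain ⟨φ, hφc, hφ⟩ := exists_continuousOn_fixedPoint_mem_closedBall (by norm_num)
    (fun y hy => hTlip y hy.1) hT₀ hTc
  refine ⟨φ, hφc, fun y hy hhy => ?_⟩
  obtain ⟨hφr, hφT, huniq⟩ := hφ y ⟨hy, hhy⟩
  refine ⟨hmem y hy (φ y) hφr, sub_eq_self.1 hφT, fun hy0 => ?_⟩
  exact (huniq 0 (mem_closedBall_self (by linarith [norm_nonneg (h y)])) (by simp [T, hy0])).symm

theorem exists_retraction_near_compact_of_dense [FiniteDimensional ℝ F] {D : Submodule ℝ E}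
    (hD : Dense (D : Set E)) {V : Set E} (hV : IsOpen V) {h : E → F} (hC1 : ContDiffOn ℝ 1 h V)
    {K : Set E} (hK : IsCompact K) (hKV : K ⊆ V) (hK0 : ∀ x ∈ K, h x = 0)
    (hsurj : ∀ x ∈ K, Function.Surjective (fderiv ℝ h x)) :
    ∃ Ω, IsOpen Ω ∧ K ⊆ Ω ∧ ∃ ρ : E → E, ContinuousOn ρ Ω ∧
      ∀ y ∈ Ω, ρ y ∈ V ∧ h (ρ y) = 0 ∧ ρ y - y ∈ D ∧ (h y = 0 → ρ y = y) := by
  have hderiv : ∀ x ∈ V, HasFDerivAt h (fderiv ℝ h x) x := fun x hx =>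
    ((hC1.differentiableOn one_ne_zero x hx).differentiableAt (hV.mem_nhds hx)).hasFDerivAt
  have hA : ∀ x ∈ K, ContinuousAt (fderiv ℝ h) x := fun x hx =>
    (hC1.continuousOn_fderiv_of_isOpen hV le_rfl).continuousAt (hV.mem_nhds (hKV hx))
  obtain ⟨Ω, hΩ, hKΩ, τ, hτ, M, R, hRc, hR⟩ :=
    exists_continuousOn_approxRightInverse_near_compact hD hK hV hKV hA hsurj
  set r := τ / (M + 1)
  have hRr : ∀ y ∈ Ω, ‖R y‖ * r ≤ τ := fun y hy => by
    have hM : ‖R y‖ ≤ M := (hR y hy).2.1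
    have : 0 < M + 1 := by linarith [norm_nonneg (R y)]
    calc ‖R y‖ * r ≤ M * r := by gcongr
      _ ≤ τ := by rw [← mul_div_assoc, div_le_iff₀ this]; nlinarith
  obtain ⟨w, hwc, hw⟩ := exists_continuousOn_newton_correction hRc hRr fun y hy ξ hξ =>
    ⟨hderiv ξ ((hR y hy).2.2 ξ hξ).1, ((hR y hy).2.2 ξ hξ).2⟩
  have hhc : ContinuousOn h Ω := fun y hy =>
    (hderiv y ((hR y hy).2.2 y (mem_closedBall_self hτ.le)).1).continuousAt.continuousWithinAt
  have hsub : Ω ∩ h ⁻¹' ball 0 (r / 2) ⊆ {y ∈ Ω | ‖h y‖ ≤ r / 2} := fun y hy =>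
    ⟨hy.1, (mem_ball_zero_iff.1 hy.2).le⟩
  refine ⟨Ω ∩ h ⁻¹' ball 0 (r / 2), hhc.isOpen_inter_preimage hΩ isOpen_ball, fun x hx => ?_,
    fun y => y + R y (w y),
    continuousOn_id.add ((hRc.mono (hsub.trans (sep_subset _ _))).clm_apply (hwc.mono hsub)),
    fun y hy => ?_⟩
  · have hM : 0 ≤ M := (norm_nonneg _).trans (hR x (hKΩ hx)).2.1
    exact ⟨hKΩ hx, by simp [hK0 x hx]; positivity⟩
  · obtain ⟨hball, hzero, hfix⟩ := hw y hy.1 (hsub hy).2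
    refine ⟨((hR y hy.1).2.2 _ hball).1, hzero, by simpa using (hR y hy.1).1 (w y), fun hy0 => ?_⟩
    simp [hfix hy0]

end

theorem dense_subspace_homotopy_surjective_general
    {E : Type*} [NormedAddCommGroup E] [InnerProductSpace ℝ E]
    (n : ℕ) (D : Submodule ℝ E) (hD : Dense (D : Set E))
    (V : Set E) (hV : IsOpen V) (h : E → EuclideanSpace ℝ (Fin n))
    (hC1 : ContDiffOn ℝ 1 h V)
    (hsurj : ∀ x ∈ V, Function.Surjective (fderiv ℝ h x))
    (U : Set E)
    (hUopen : ∃ W : Set E, IsOpen W ∧ U = {x ∈ V | h x = 0} ∩ W)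
    (k : ℕ) (f : sphere (0 : EuclideanSpace ℝ (Fin (k + 1))) 1 → E)
    (hf : Continuous f) (hfU : ∀ x, f x ∈ U) :
    ∃ F : ℝ → sphere (0 : EuclideanSpace ℝ (Fin (k + 1))) 1 → E,
      ContinuousOn (fun p : ℝ × sphere (0 : EuclideanSpace ℝ (Fin (k + 1))) 1 =>
        F p.1 p.2) (Icc 0 1 ×ˢ univ) ∧
      F 0 = f ∧
      (∀ s ∈ Icc (0:ℝ) 1, ∀ x, F s x ∈ U) ∧
      (∀ x, F 1 x ∈ (D : Set E) ∩ U) := by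
  obtain ⟨W, hW, rfl⟩ := hUopen
  have hK : IsCompact (range f) := isCompact_range hf
  obtain ⟨Ω, hΩ, hKΩ, ρ, hρc, hρ⟩ := exists_retraction_near_compact_of_dense hD (hV.inter hW)
    (hC1.mono inter_subset_left) hK (range_subset_iff.2 fun x => ⟨(hfU x).1.1, (hfU x).2⟩)
    (forall_mem_range.2 fun x => (hfU x).1.2) (forall_mem_range.2 fun x => hsurj _ (hfU x).1.1)
  obtain ⟨δ, hδ, hδΩ⟩ := hK.exists_thickening_subset_open hΩ hKΩ
  obtain ⟨g, hg⟩ := exists_continuousMap_mem_dist_lt_of_dense D.convex hD ⟨f, hf⟩ hδ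
  set G : ℝ → sphere (0 : EuclideanSpace ℝ (Fin (k + 1))) 1 → E :=
    fun s x => AffineMap.lineMap (f x) (g x) s
  have hGΩ : ∀ s ∈ Icc (0 : ℝ) 1, ∀ x, G s x ∈ Ω := fun s hs x => hδΩ <|
    mem_thickening_iff.2 ⟨f x, mem_range_self x, by
      rw [dist_lineMap_left, Real.norm_of_nonneg hs.1, dist_comm]
      exact (mul_le_of_le_one_left dist_nonneg hs.2).trans_lt (hg x).2⟩
  have hFU : ∀ s ∈ Icc (0 : ℝ) 1, ∀ x, ρ (G s x) ∈ {x ∈ V | h x = 0} ∩ W := by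
    intro s hs x
    obtain ⟨⟨hV', hW'⟩, h0, -⟩ := hρ _ (hGΩ s hs x)
    exact ⟨⟨hV', h0⟩, hW'⟩
  refine ⟨fun s x => ρ (G s x), hρc.comp (by fun_prop) fun p hp => hGΩ p.1 hp.1 p.2,
    funext fun x => ?_, hFU, fun x => ⟨?_, hFU 1 (right_mem_Icc.2 zero_le_one) x⟩⟩
  · simpa [G] using (hρ (f x) (hKΩ (mem_range_self x))).2.2.2 (hfU x).1.2
  · have hρD := (hρ _ (hGΩ 1 (right_mem_Icc.2 zero_le_one) x)).2.2.1
    simpa [G] using D.add_mem hρD (hg x).1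

/-- Let `E` be a separable real Hilbert space, `D ⊆ E` a dense linear
subspace, `V ⊆ E` open, `h : V → ℝⁿ` of class `C¹` with surjective derivative everywhere on
`V`, `L = h⁻¹(0)` and `U` open in `L`. Then every continuous map `f : Sᵏ → U` is homotopic,
within `U`, to a map with values in `D ∩ U`; in particular `D ∩ U ↪ U` is surjective on all
homotopy groups. -/
theorem dense_subspace_homotopy_surjective
    {E : Type*} [NormedAddCommGroup E] [InnerProductSpace ℝ E] [CompleteSpace E]
    [TopologicalSpace.SeparableSpace E]
    (n : ℕ) (D : Submodule ℝ E) (hD : Dense (D : Set E))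
    (V : Set E) (hV : IsOpen V) (h : E → EuclideanSpace ℝ (Fin n))
    (hC1 : ContDiffOn ℝ 1 h V)
    (hsurj : ∀ x ∈ V, Function.Surjective (fderiv ℝ h x))
    (U : Set E) (hUL : U ⊆ {x ∈ V | h x = 0})
    (hUopen : ∃ W : Set E, IsOpen W ∧ U = {x ∈ V | h x = 0} ∩ W)
    (k : ℕ) (f : sphere (0 : EuclideanSpace ℝ (Fin (k + 1))) 1 → E)
    (hf : Continuous f) (hfU : ∀ x, f x ∈ U) :
    ∃ F : ℝ → sphere (0 : EuclideanSpace ℝ (Fin (k + 1))) 1 → E,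
      ContinuousOn (fun p : ℝ × sphere (0 : EuclideanSpace ℝ (Fin (k + 1))) 1 =>
        F p.1 p.2) (Icc 0 1 ×ˢ univ) ∧
      F 0 = f ∧
      (∀ s ∈ Icc (0:ℝ) 1, ∀ x, F s x ∈ U) ∧
      (∀ x, F 1 x ∈ (D : Set E) ∩ U) :=
  dense_subspace_homotopy_surjective_general n D hD V hV h hC1 hsurj U hUopen k f hf hfU
end
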